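/- Let 0 < x ≤ y and ρ > 0, and let p_m, p_n > 0 with p_m² + p_n² = 1. Define the NOMA sum rate R(ρ) = log₂(1 + ρ x p_m²/(ρ x p_n² + 1)) + log₂(1 + ρ y p_n²) and the TDMA sum rate R̄(ρ) = (1/2)log₂(1 + ρx) + (1/2)log₂(1 + ρy). Then lim_{ρ→∞} [R(ρ) - R̄(ρ)] = (1/2)log₂(y/x). -/

import Mathlib

open Filter Real

/-- high-SNR sum-rate gap of NOMA over TDMA equals (1/2)log₂(y/x). -/
theorem stmt9 (x y : ℝ) (hx : 0 < x) (hxy : x ≤ y) (pm pn : ℝ) (hpm : 0 < pm)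
    (hpn : 0 < pn) (hp : pm ^ 2 + pn ^ 2 = 1) :
    Tendsto (fun ρ : ℝ =>
        (Real.logb 2 (1 + ρ * x * pm ^ 2 / (ρ * x * pn ^ 2 + 1))
          + Real.logb 2 (1 + ρ * y * pn ^ 2))
        - ((1/2) * Real.logb 2 (1 + ρ * x) + (1/2) * Real.logb 2 (1 + ρ * y)))
      atTop (nhds ((1/2) * Real.logb 2 (y / x))) := by
  have hy : 0 < y := lt_of_lt_of_le hx hxy
  have hpn2 : 0 < pn ^ 2 := by positivity
  set H : ℝ → ℝ := fun t => ((x + t) * (y * pn ^ 2 + t) ^ 2) /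
      ((x * pn ^ 2 + t) ^ 2 * (t + y)) with hHdef
  have hH0 : H 0 = y / x := by
    simp only [hHdef, add_zero, zero_add]
    field_simp
  have hHcont : ContinuousAt H 0 := by
    apply ContinuousAt.div
    · fun_prop
    · fun_prop
    · simp only [add_zero, zero_add]
      positivity
  have hinv : Tendsto (fun ρ : ℝ => 1 / ρ) atTop (nhds 0) := by
    simpa [one_div] using (tendsto_inv_atTop_zero : Tendsto (fun ρ : ℝ => ρ⁻¹) atTop (nhds 0))
  have h1 : Tendsto (fun ρ : ℝ => H (1 / ρ)) atTop (nhds (y / x)) := by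
    simpa [hH0, Function.comp_def] using hHcont.tendsto.comp hinv
  have hyx : (0:ℝ) < y / x := by positivity
  have hlogcont : ContinuousAt (Real.logb 2) (y / x) := by
    unfold Real.logb
    exact (Real.continuousAt_log hyx.ne').div_const _
  have h2 : Tendsto (fun ρ : ℝ => (1/2) * Real.logb 2 (H (1 / ρ))) atTop
      (nhds ((1/2) * Real.logb 2 (y / x))) :=
    (hlogcont.tendsto.comp h1).const_mul _
  refine h2.congr' ?_
  filter_upwards [eventually_gt_atTop (0:ℝ)] with ρ hρ
  have ha : (0:ℝ) < 1 + ρ * x := by positivity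
  have hb : (0:ℝ) < ρ * x * pn ^ 2 + 1 := by positivity
  have hc : (0:ℝ) < 1 + ρ * y * pn ^ 2 := by positivity
  have he : (0:ℝ) < 1 + ρ * y := by positivity
  have hHval : H (1 / ρ) = ((1 + ρ * x) * (1 + ρ * y * pn ^ 2) ^ 2) /
      ((ρ * x * pn ^ 2 + 1) ^ 2 * (1 + ρ * y)) := by
    simp only [hHdef]
    rw [div_eq_div_iff (by positivity) (by positivity)]
    field_simp
    ring
  have hfrac : 1 + ρ * x * pm ^ 2 / (ρ * x * pn ^ 2 + 1) =
      (1 + ρ * x) / (ρ * x * pn ^ 2 + 1) := by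
    field_simp
    linear_combination ρ * x * hp
  rw [hHval, hfrac]
  rw [Real.logb_div (by positivity) (by positivity),
    Real.logb_mul ha.ne' (by positivity),
    Real.logb_mul (by positivity) he.ne',
    Real.logb_pow, Real.logb_pow,
    Real.logb_div ha.ne' hb.ne']
  ring
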